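/- For all P, Q ∈ pCSP: (1) if P ⊑_pmay Q then P ⊑̄_pmay Q; (2) if P ⊑_pmust Q then P ⊑̄_pmust Q. That is, state-based testing is at least as discriminating as action-based testing. -/

import Mathlib

open Classical

noncomputable section

namespace PaperPCSP

/-! ### Finitely supported distributions as weight functions -/

/-- Weight functions on `X`; probability distributions are those satisfying `IsDist`. -/
abbrev Wt (X : Type) := X → ℝ

/-- The support of a weight function. -/
def dsupp {X : Type} (Δ : Wt X) : Set X := Function.support Δ

/-- `Δ` is a finitely supported probability distribution. -/
def IsDist {X : Type} (Δ : Wt X) : Prop :=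
  (∀ x, 0 ≤ Δ x) ∧ (dsupp Δ).Finite ∧ ∑ᶠ x, Δ x = 1

/-- The point distribution at `x`. -/
def dirac {X : Type} (x : X) : Wt X := fun y => if y = x then 1 else 0

/-- Pushforward of a weight function along a map. -/
def dmap {X Y : Type} (g : X → Y) (Δ : Wt X) : Wt Y :=
  fun y => ∑ᶠ x ∈ {x | g x = y}, Δ x

/-- Expected value of `f` under `Δ`. -/
def dexp {X : Type} (Δ : Wt X) (f : X → ℝ) : ℝ := ∑ᶠ x, Δ x * f x

/-! ### Syntax of pCSP -/

mutual
/-- Process terms of pCSP (over prefix alphabet `A`). -/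
inductive PCSP (A : Type) : Type where
  | st : SCSP A → PCSP A
  | pch : ℝ → PCSP A → PCSP A → PCSP A
/-- State-based process terms of pCSP. -/
inductive SCSP (A : Type) : Type where
  | nil : SCSP A
  | pre : A → PCSP A → SCSP A
  | ich : PCSP A → PCSP A → SCSP A
  | ech : SCSP A → SCSP A → SCSP A
  | par : Set A → SCSP A → SCSP A → SCSP A
end

mutual
/-- Well-formedness: all probabilistic choices have `p ∈ (0,1)`.  `pCSP` proper
consists of the well-formed terms. -/
inductive PWF : {A : Type} → PCSP A → Prop where
  | st {A} {s : SCSP A} : SWF s → PWF (.st s)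
  | pch {A} {p : ℝ} {P Q : PCSP A} : 0 < p → p < 1 → PWF P → PWF Q → PWF (.pch p P Q)
inductive SWF : {A : Type} → SCSP A → Prop where
  | nil {A} : SWF (SCSP.nil (A := A))
  | pre {A} {a : A} {P} : PWF P → SWF (.pre a P)
  | ich {A} {P Q : PCSP A} : PWF P → PWF Q → SWF (.ich P Q)
  | ech {A} {s t : SCSP A} : SWF s → SWF t → SWF (.ech s t)
  | par {A} {B : Set A} {s t : SCSP A} : SWF s → SWF t → SWF (.par B s t)
end

/-- Interpretation of process terms as distributions over state-based terms. -/
def PCSP.interp {A : Type} : PCSP A → Wt (SCSP A)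
  | .st s => dirac s
  | .pch p P Q => fun t => p * P.interp t + (1 - p) * Q.interp t

/-! ### Operational semantics -/

/-- The probabilistic labelled transition relation; `none` is the internal action τ. -/
inductive Step {A : Type} : SCSP A → Option A → Wt (SCSP A) → Prop where
  | pre (a : A) (P : PCSP A) : Step (.pre a P) (some a) P.interp
  | ichL (P Q : PCSP A) : Step (.ich P Q) none P.interp
  | ichR (P Q : PCSP A) : Step (.ich P Q) none Q.interp
  | echL {s₁ s₂ : SCSP A} {a : A} {Δ} :
      Step s₁ (some a) Δ → Step (.ech s₁ s₂) (some a) Δ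
  | echR {s₁ s₂ : SCSP A} {a : A} {Δ} :
      Step s₂ (some a) Δ → Step (.ech s₁ s₂) (some a) Δ
  | echTL {s₁ s₂ : SCSP A} {Δ} :
      Step s₁ none Δ → Step (.ech s₁ s₂) none (dmap (fun t => .ech t s₂) Δ)
  | echTR {s₁ s₂ : SCSP A} {Δ} :
      Step s₂ none Δ → Step (.ech s₁ s₂) none (dmap (fun t => .ech s₁ t) Δ)
  | parL {B : Set A} {s₁ s₂ : SCSP A} {α : Option A} {Δ} :
      Step s₁ α Δ → (∀ a, α = some a → a ∉ B) →
      Step (.par B s₁ s₂) α (dmap (fun t => .par B t s₂) Δ)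
  | parR {B : Set A} {s₁ s₂ : SCSP A} {α : Option A} {Δ} :
      Step s₂ α Δ → (∀ a, α = some a → a ∉ B) →
      Step (.par B s₁ s₂) α (dmap (fun t => .par B s₁ t) Δ)
  | parS {B : Set A} {s₁ s₂ : SCSP A} {a : A} {Δ₁ Δ₂} :
      a ∈ B → Step s₁ (some a) Δ₁ → Step s₂ (some a) Δ₂ →
      Step (.par B s₁ s₂) none
        (dmap (fun q : SCSP A × SCSP A => .par B q.1 q.2) (fun q => Δ₁ q.1 * Δ₂ q.2))

/-! ### Lifting relations to distributions, weak transitions -/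

/-- Lifting of a state-vs-distribution relation to distributions. -/
def Lift {A : Type} (R : SCSP A → Wt (SCSP A) → Prop) (Δ Θ : Wt (SCSP A)) : Prop :=
  ∃ (n : ℕ) (p : Fin n → ℝ) (s : Fin n → SCSP A) (Φ : Fin n → Wt (SCSP A)),
    (∀ i, 0 ≤ p i) ∧ (∑ i, p i = 1) ∧
    (Δ = fun t => ∑ i, p i * dirac (s i) t) ∧
    (∀ i, R (s i) (Φ i)) ∧
    (Θ = fun t => ∑ i, p i * Φ i t)

/-- The transition relation lifted to distributions. -/
def StepD {A : Type} (α : Option A) : Wt (SCSP A) → Wt (SCSP A) → Prop :=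
  Lift (fun s Δ => Step s α Δ)

/-- `s --τ̂--> Δ` : a τ-step or staying put. -/
def stepTauHat {A : Type} (s : SCSP A) (Δ : Wt (SCSP A)) : Prop :=
  Step s none Δ ∨ Δ = dirac s

/-- `==τ̂==>` : reflexive-transitive closure of the lifted `--τ̂-->`. -/
def TauStar {A : Type} : Wt (SCSP A) → Wt (SCSP A) → Prop :=
  Relation.ReflTransGen (Lift stepTauHat)

/-- `Δ ==â==> Θ` for a visible action `a`. -/
def WeakA {A : Type} (a : A) (Δ Θ : Wt (SCSP A)) : Prop :=
  ∃ Δ₁ Δ₂, TauStar Δ Δ₁ ∧ StepD (some a) Δ₁ Δ₂ ∧ TauStar Δ₂ Θ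

/-- `Δ ==α̂==> Θ`, which is `==τ̂==>` when `α = τ`. -/
def Weak {A : Type} : Option A → Wt (SCSP A) → Wt (SCSP A) → Prop
  | none => TauStar
  | some a => WeakA a

/-- `s ↛X` : the state `s` enables no action from `X ∪ {τ}`. -/
def SRefuses {A : Type} (s : SCSP A) (X : Set A) : Prop :=
  (∀ Δ, ¬ Step s none Δ) ∧ ∀ a ∈ X, ∀ Δ, ¬ Step s (some a) Δ

/-- `Δ ↛X` : every state in the support of `Δ` refuses `X`. -/
def DRefuses {A : Type} (Δ : Wt (SCSP A)) (X : Set A) : Prop :=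
  ∀ s ∈ dsupp Δ, SRefuses s X

/-! ### Simulation and failure simulation -/

/-- `R` is a simulation. -/
def IsSimulation {A : Type} (R : SCSP A → Wt (SCSP A) → Prop) : Prop :=
  ∀ s Θ α Δ, R s Θ → Step s α Δ → ∃ Θ', Weak α Θ Θ' ∧ Lift R Δ Θ'

/-- `R` is a failure simulation. -/
def IsFailureSim {A : Type} (R : SCSP A → Wt (SCSP A) → Prop) : Prop :=
  IsSimulation R ∧
  ∀ s Θ (X : Set A), R s Θ → SRefuses s X → ∃ Θ', TauStar Θ Θ' ∧ DRefuses Θ' X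

/-- `s ⊲_S Θ`. -/
def simLE {A : Type} (s : SCSP A) (Θ : Wt (SCSP A)) : Prop :=
  ∃ R, IsSimulation R ∧ R s Θ

/-- `s ⊲_FS Θ`. -/
def fsimLE {A : Type} (s : SCSP A) (Θ : Wt (SCSP A)) : Prop :=
  ∃ R, IsFailureSim R ∧ R s Θ

/-- The simulation preorder `P ⊑_S Q`. -/
def SimPre {A : Type} (P Q : PCSP A) : Prop :=
  ∃ Θ, TauStar Q.interp Θ ∧ Lift simLE P.interp Θ

/-- The failure simulation preorder `P ⊑_FS Q`. -/
def FSimPre {A : Type} (P Q : PCSP A) : Prop :=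
  ∃ Θ, TauStar P.interp Θ ∧ Lift fsimLE Q.interp Θ
/-! ### Syntactic operations: renaming, and ◻ / ∥ distributed over probabilistic choice -/

mutual
/-- Renaming of actions in a process term. -/
def mapP {A B : Type} (f : A → B) : PCSP A → PCSP B
  | .st s => .st (mapS f s)
  | .pch p P Q => .pch p (mapP f P) (mapP f Q)
def mapS {A B : Type} (f : A → B) : SCSP A → SCSP B
  | .nil => .nil
  | .pre a P => .pre (f a) (mapP f P)
  | .ich P Q => .ich (mapP f P) (mapP f Q)
  | .ech s t => .ech (mapS f s) (mapS f t)
  | .par X s t => .par (f '' X) (mapS f s) (mapS f t)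
end

/-- `s ∥_B Q` for a state `s`, distributing over probabilistic choice. -/
def parCS {A : Type} (B : Set A) (s : SCSP A) : PCSP A → PCSP A
  | .st t => .st (.par B s t)
  | .pch p Q₁ Q₂ => .pch p (parCS B s Q₁) (parCS B s Q₂)

/-- `P ∥_B Q` on processes, distributing over probabilistic choice. -/
def parC {A : Type} (B : Set A) : PCSP A → PCSP A → PCSP A
  | .st s, Q => parCS B s Q
  | .pch p P₁ P₂, Q => .pch p (parC B P₁ Q) (parC B P₂ Q)

/-- `s ◻ Q` for a state `s`, distributing over probabilistic choice. -/
def echCS {A : Type} (s : SCSP A) : PCSP A → PCSP A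
  | .st t => .st (.ech s t)
  | .pch p Q₁ Q₂ => .pch p (echCS s Q₁) (echCS s Q₂)

/-- `P ◻ Q` on processes, distributing over probabilistic choice. -/
def echC {A : Type} : PCSP A → PCSP A → PCSP A
  | .st s, Q => echCS s Q
  | .pch p P₁ P₂, Q => .pch p (echC P₁ Q) (echC P₂ Q)

/-- Finite (nonempty) indexed internal choice `⨅_{i} P i`. -/
def ichFin {A : Type} : (n : ℕ) → (Fin (n+1) → PCSP A) → PCSP A
  | 0, P => P 0
  | n+1, P => .st (.ich (P 0) (ichFin n (fun i => P i.succ)))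

/-- Finite (nonempty) indexed probabilistic choice `⊕_{i} p i · P i`. -/
def pchFin {A : Type} : (n : ℕ) → (Fin (n+1) → ℝ) → (Fin (n+1) → PCSP A) → PCSP A
  | 0, _, P => P 0
  | n+1, p, P => .pch (p 0) (P 0)
      (pchFin n (fun i => p i.succ / (1 - p 0)) (fun i => P i.succ))

/-- Finite (nonempty) indexed external choice of states `◻_{i} s i`. -/
def echFin {A : Type} : (n : ℕ) → (Fin (n+1) → SCSP A) → SCSP A
  | 0, s => s 0
  | n+1, s => .ech (s 0) (echFin n (fun i => s i.succ))

/-- External choice of a list of states (empty list gives `0`). -/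
def echList {A : Type} : List (SCSP A) → SCSP A
  | [] => .nil
  | s :: l => .ech s (echList l)

/-! ### State-based scalar testing -/

/-- The alphabet `Act ∪ {ω}` for ordinary (scalar) tests. -/
abbrev TAct (A : Type) := Sum A Unit

/-- The success action ω. -/
def omA {A : Type} : TAct A := Sum.inr ()

/-- Membership in the state-based results-gathering function `V` (with success action `w`). -/
inductive VMem {B : Type} (w : B) : SCSP B → ℝ → Prop where
  | succ {s : SCSP B} {Δ} : Step s (some w) Δ → VMem w s 1
  | step {s : SCSP B} {α : Option B} {Δ} (f : SCSP B → ℝ) :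
      (∀ Θ, ¬ Step s (some w) Θ) → Step s α Δ →
      (∀ t ∈ dsupp Δ, VMem w t (f t)) → VMem w s (dexp Δ f)
  | stuck {s : SCSP B} : (∀ α Δ, ¬ Step s α Δ) → VMem w s 0

/-- `V(Δ)` : the set of outcomes of a distribution, via choice functions. -/
def VD {B : Type} (w : B) (Δ : Wt (SCSP B)) : Set ℝ :=
  {r | ∃ f : SCSP B → ℝ, (∀ t ∈ dsupp Δ, VMem w t (f t)) ∧ r = dexp Δ f}

/-- The application `T ∥_Act P` of a test to a process. -/
def applyTest {A : Type} (T : PCSP (TAct A)) (P : PCSP A) : PCSP (TAct A) :=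
  parC (Set.range Sum.inl) T (mapP Sum.inl P)

/-- `A(T,P)` : state-based testing outcomes. -/
def Aset {A : Type} (T : PCSP (TAct A)) (P : PCSP A) : Set ℝ :=
  VD omA (applyTest T P).interp

/-- The Hoare preorder on sets of reals. -/
def HoareLE (X Y : Set ℝ) : Prop := ∀ x ∈ X, ∃ y ∈ Y, x ≤ y

/-- The Smyth preorder on sets of reals. -/
def SmythLE (X Y : Set ℝ) : Prop := ∀ y ∈ Y, ∃ x ∈ X, x ≤ y

/-- The may-testing preorder `⊑_pmay`. -/
def PMay {A : Type} (P Q : PCSP A) : Prop :=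
  ∀ T : PCSP (TAct A), PWF T → HoareLE (Aset T P) (Aset T Q)

/-- The must-testing preorder `⊑_pmust`. -/
def PMust {A : Type} (P Q : PCSP A) : Prop :=
  ∀ T : PCSP (TAct A), PWF T → SmythLE (Aset T P) (Aset T Q)

/-! ### Action-based scalar testing -/

/-- Membership in the action-based results-gathering function `V̄`. -/
inductive VBarMem {B : Type} (w : B) : SCSP B → ℝ → Prop where
  | succ {s : SCSP B} {Δ} : Step s (some w) Δ → VBarMem w s 1
  | step {s : SCSP B} {α : Option B} {Δ} (f : SCSP B → ℝ) :
      α ≠ some w → Step s α Δ →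
      (∀ t ∈ dsupp Δ, VBarMem w t (f t)) → VBarMem w s (dexp Δ f)
  | stuck {s : SCSP B} : (∀ α Δ, ¬ Step s α Δ) → VBarMem w s 0

/-- `V̄(Δ)`. -/
def VBarD {B : Type} (w : B) (Δ : Wt (SCSP B)) : Set ℝ :=
  {r | ∃ f : SCSP B → ℝ, (∀ t ∈ dsupp Δ, VBarMem w t (f t)) ∧ r = dexp Δ f}

/-- `Ā(T,P)` : action-based testing outcomes. -/
def AsetBar {A : Type} (T : PCSP (TAct A)) (P : PCSP A) : Set ℝ :=
  VBarD omA (applyTest T P).interp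

/-- The action-based may-testing preorder `⊑̄_pmay`. -/
def PMayBar {A : Type} (P Q : PCSP A) : Prop :=
  ∀ T : PCSP (TAct A), PWF T → HoareLE (AsetBar T P) (AsetBar T Q)

/-- The action-based must-testing preorder `⊑̄_pmust`. -/
def PMustBar {A : Type} (P Q : PCSP A) : Prop :=
  ∀ T : PCSP (TAct A), PWF T → SmythLE (AsetBar T P) (AsetBar T Q)
/-! ### ω-avoiding transitions and the relation ⊲ᵉ_FS -/

/-- `s --α-->_ω Δ` : a transition from a state not enabling the success action `w`. -/
def StepOmega {B : Type} (w : B) (s : SCSP B) (α : Option B) (Δ : Wt (SCSP B)) : Prop :=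
  (∀ Θ, ¬ Step s (some w) Θ) ∧ Step s α Δ

/-- `s --τ̂-->_ω Δ`. -/
def stepTauHatOm {B : Type} (w : B) (s : SCSP B) (Δ : Wt (SCSP B)) : Prop :=
  StepOmega w s none Δ ∨ Δ = dirac s

/-- `==τ̂==>_ω`. -/
def TauStarOm {B : Type} (w : B) : Wt (SCSP B) → Wt (SCSP B) → Prop :=
  Relation.ReflTransGen (Lift (stepTauHatOm w))

/-- `==â==>_ω` for a visible action `a`. -/
def WeakAOm {B : Type} (w : B) (a : B) (Δ Θ : Wt (SCSP B)) : Prop :=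
  ∃ Δ₁ Δ₂, TauStarOm w Δ Δ₁ ∧
    Lift (fun s Φ => StepOmega w s (some a) Φ) Δ₁ Δ₂ ∧ TauStarOm w Δ₂ Θ

/-- `==α̂==>_ω`. -/
def WeakOm {B : Type} (w : B) : Option B → Wt (SCSP B) → Wt (SCSP B) → Prop
  | none => TauStarOm w
  | some a => WeakAOm w a

/-- A postfixed point for the coinductive definition of `⊲ᵉ_FS`. -/
def IsEFailSim {B : Type} (w : B) (R : SCSP B → Wt (SCSP B) → Prop) : Prop :=
  (∀ s Θ α Δ, R s Θ → StepOmega w s α Δ → ∃ Θ', WeakOm w α Θ Θ' ∧ Lift R Δ Θ') ∧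
  (∀ s Θ (X : Set B), R s Θ → w ∈ X → SRefuses s X →
    ∃ Θ', TauStarOm w Θ Θ' ∧ DRefuses Θ' X)

/-- `s ⊲ᵉ_FS Θ` : the largest relation satisfying the transfer properties. -/
def efsimLE {B : Type} (w : B) (s : SCSP B) (Θ : Wt (SCSP B)) : Prop :=
  ∃ R, IsEFailSim w R ∧ R s Θ

/-! ### Vector-based testing with success actions from Ω -/

/-- `α!o` : update the `α`-component of the outcome tuple to 1 if `α` is a success action. -/
def bang {A Om : Type} (α : Option (Sum A Om)) (o : Om → ℝ) : Om → ℝ :=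
  fun w => if α = some (Sum.inr w) then 1 else o w

mutual
/-- Membership in the vector-based convex-closed results-gathering function `V̄↕^Ω`
for states.  -/
inductive WMem : {A Om : Type} → SCSP (Sum A Om) → (Om → ℝ) → Prop where
  | stuck {A Om : Type} {s : SCSP (Sum A Om)} :
      (∀ α Δ, ¬ Step s α Δ) → WMem s (fun _ => 0)
  | step {A Om : Type} {s : SCSP (Sum A Om)} {n : ℕ}
      (p : Fin (n+1) → ℝ) (α : Fin (n+1) → Option (Sum A Om))
      (Δ : Fin (n+1) → Wt (SCSP (Sum A Om))) (o : Fin (n+1) → Om → ℝ) :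
      (∀ i, 0 ≤ p i) → (∑ i, p i = 1) →
      (∀ i, Step s (α i) (Δ i)) →
      (∀ i, WMemD (Δ i) (o i)) →
      WMem s (fun w => ∑ i, p i * bang (α i) (o i) w)
/-- Membership in `V̄↕^Ω` for distributions. -/
inductive WMemD : {A Om : Type} → Wt (SCSP (Sum A Om)) → (Om → ℝ) → Prop where
  | mk {A Om : Type} {Δ : Wt (SCSP (Sum A Om))} (f : SCSP (Sum A Om) → Om → ℝ) :
      (∀ t ∈ dsupp Δ, WMem t (f t)) → WMemD Δ (fun w => ∑ᶠ t, Δ t * f t w)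
end

/-- `V̄↕^Ω(Δ)` as a set of outcome tuples. -/
def WsetD {A Om : Type} (Δ : Wt (SCSP (Sum A Om))) : Set (Om → ℝ) :=
  {o | WMemD Δ o}

/-- The application `T ∥_Act P` of an Ω-test to a process. -/
def applyTestO {A Om : Type} (T : PCSP (Sum A Om)) (P : PCSP A) : PCSP (Sum A Om) :=
  parC (Set.range Sum.inl) T (mapP Sum.inl P)

/-- `A↕^Ω(T,P)` : vector-based testing outcomes of a process. -/
def AO {A Om : Type} (T : PCSP (Sum A Om)) (P : PCSP A) : Set (Om → ℝ) :=
  WsetD (applyTestO T P).interp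

/-- `A↕^Ω(T,Δ)` for a distribution `Δ ∈ D(sCSP)`, via expected values. -/
def AOD {A Om : Type} (T : PCSP (Sum A Om)) (Δ : Wt (SCSP A)) : Set (Om → ℝ) :=
  {o | ∃ g : SCSP A → Om → ℝ,
    (∀ s ∈ dsupp Δ, g s ∈ AO T (.st s)) ∧ o = fun w => ∑ᶠ s, Δ s * g s w}

/-- Hoare preorder on sets of outcome tuples (componentwise order). -/
def HoareLEV {Om : Type} (X Y : Set (Om → ℝ)) : Prop := ∀ x ∈ X, ∃ y ∈ Y, x ≤ y

/-- Smyth preorder on sets of outcome tuples (componentwise order). -/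
def SmythLEV {Om : Type} (X Y : Set (Om → ℝ)) : Prop := ∀ y ∈ Y, ∃ x ∈ X, x ≤ y

/-- The vector-based may-testing preorder `⊑̄^Ω_pmay`. -/
def PMayO {A : Type} (Om : Type) (P Q : PCSP A) : Prop :=
  ∀ T : PCSP (Sum A Om), PWF T → HoareLEV (AO T P) (AO T Q)

/-- The vector-based must-testing preorder `⊑̄^Ω_pmust`. -/
def PMustO {A : Type} (Om : Type) (P Q : PCSP A) : Prop :=
  ∀ T : PCSP (Sum A Om), PWF T → SmythLEV (AO T P) (AO T Q)

/-- The unit outcome vector `ω⃗`. -/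
def unitVec {Om : Type} (w : Om) : Om → ℝ := fun w' => if w' = w then 1 else 0

/-! Occurrence of an action in a process term. -/
mutual
/-- Occurrence of an action in a process term. -/
inductive PUses : {B : Type} → B → PCSP B → Prop where
  | st {B : Type} {b : B} {s} : SUses b s → PUses b (.st s)
  | pchL {B : Type} {b : B} {p P Q} : PUses b P → PUses b (.pch p P Q)
  | pchR {B : Type} {b : B} {p P Q} : PUses b Q → PUses b (.pch p P Q)
inductive SUses : {B : Type} → B → SCSP B → Prop where
  | preAct {B : Type} {b : B} {P} : SUses b (.pre b P)
  | pre {B : Type} {b : B} {a P} : PUses b P → SUses b (.pre a P)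
  | ichL {B : Type} {b : B} {P Q} : PUses b P → SUses b (.ich P Q)
  | ichR {B : Type} {b : B} {P Q} : PUses b Q → SUses b (.ich P Q)
  | echL {B : Type} {b : B} {s t} : SUses b s → SUses b (.ech s t)
  | echR {B : Type} {b : B} {s t} : SUses b t → SUses b (.ech s t)
  | parSet {B : Type} {b : B} {X s t} : b ∈ X → SUses b (.par X s t)
  | parL {B : Type} {b : B} {X s t} : SUses b s → SUses b (.par X s t)
  | parR {B : Type} {b : B} {X s t} : SUses b t → SUses b (.par X s t)
end
/-! ### The modal logic F -/

/-- Modal formulae of the logic `F`. -/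
inductive Form (A : Type) : Type where
  | ref : Set A → Form A
  | dia : A → Form A → Form A
  | conj : (n : ℕ) → (Fin n → Form A) → Form A
  | prob : (n : ℕ) → (Fin n → ℝ) → (Fin n → Form A) → Form A

/-- Well-formed formulae: probabilistic choices carry genuine distributions. -/
inductive WFF {A : Type} : Form A → Prop where
  | ref {X} : WFF (.ref X)
  | dia {a φ} : WFF φ → WFF (.dia a φ)
  | conj {n φs} : (∀ i, WFF (φs i)) → WFF (.conj n φs)
  | prob {n p φs} : (∀ i, 0 ≤ p i) → (∑ i, p i = 1) →
      (∀ i, WFF (φs i)) → WFF (.prob n p φs)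

/-- Formulae of the sublogic `L`: no refusal construct. -/
inductive NoRef {A : Type} : Form A → Prop where
  | dia {a φ} : NoRef φ → NoRef (.dia a φ)
  | conj {n φs} : (∀ i, NoRef (φs i)) → NoRef (.conj n φs)
  | prob {n p φs} : (∀ i, NoRef (φs i)) → NoRef (.prob n p φs)

/-- The satisfaction relation `Δ ⊨ φ`. -/
inductive Sat {A : Type} : Form A → Wt (SCSP A) → Prop where
  | ref {X : Set A} {Δ Δ'} : TauStar Δ Δ' → DRefuses Δ' X → Sat (.ref X) Δ
  | dia {a φ Δ Δ'} : WeakA a Δ Δ' → Sat φ Δ' → Sat (.dia a φ) Δ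
  | conj {n φs Δ} : (∀ i, Sat (φs i) Δ) → Sat (.conj n φs) Δ
  | prob {n} {p : Fin n → ℝ} {φs Δ} (Δs : Fin n → Wt (SCSP A)) :
      (∀ i, Sat (φs i) (Δs i)) →
      TauStar Δ (fun t => ∑ i, p i * Δs i t) →
      Sat (.prob n p φs) Δ

/-- The logical preorder `⊑^L`. -/
def LPre {A : Type} (P Q : PCSP A) : Prop :=
  ∀ φ : Form A, WFF φ → NoRef φ → Sat φ P.interp → Sat φ Q.interp

/-- The logical preorder `⊑^F`. -/
def FPre {A : Type} (P Q : PCSP A) : Prop :=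
  ∀ φ : Form A, WFF φ → Sat φ Q.interp → Sat φ P.interp

mutual
/-- `CharS s φ` : `φ` is an F-characteristic formula `φ_s` of the state `s`. -/
inductive CharS : {A : Type} → SCSP A → Form A → Prop where
  | noTau {A : Type} {s : SCSP A} (n : ℕ) (a : Fin n → A)
      (Δ : Fin n → Wt (SCSP A)) (φ : Fin n → Form A) :
      (∀ Θ, ¬ Step s none Θ) →
      (∀ i, Step s (some (a i)) (Δ i)) →
      (∀ b Θ, Step s (some b) Θ → ∃ i, a i = b ∧ Δ i = Θ) →
      (∀ i, CharD (Δ i) (φ i)) →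
      CharS s (.conj (n+1) (Fin.snoc (fun i => .dia (a i) (φ i))
        (.ref {b : A | ∀ Θ, ¬ Step s (some b) Θ})))
  | tau {A : Type} {s : SCSP A} (n m : ℕ) (a : Fin n → A)
      (Δ : Fin n → Wt (SCSP A)) (φ : Fin n → Form A)
      (Θs : Fin m → Wt (SCSP A)) (ψ : Fin m → Form A) :
      (∃ Θ, Step s none Θ) →
      (∀ i, Step s (some (a i)) (Δ i)) →
      (∀ b Θ, Step s (some b) Θ → ∃ i, a i = b ∧ Δ i = Θ) →
      (∀ j, Step s none (Θs j)) →
      (∀ Θ, Step s none Θ → ∃ j, Θs j = Θ) →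
      (∀ i, CharD (Δ i) (φ i)) →
      (∀ j, CharD (Θs j) (ψ j)) →
      CharS s (.conj (n+m) (Fin.append (fun i => .dia (a i) (φ i)) ψ))
/-- `CharD Δ φ` : `φ` is an F-characteristic formula `φ_Δ` of the distribution `Δ`. -/
inductive CharD : {A : Type} → Wt (SCSP A) → Form A → Prop where
  | mk {A : Type} {Δ : Wt (SCSP A)} (n : ℕ) (s : Fin n → SCSP A) (φ : Fin n → Form A) :
      Function.Injective s →
      (∀ i, s i ∈ dsupp Δ) →
      (∀ t ∈ dsupp Δ, ∃ i, s i = t) →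
      (∀ i, CharS (s i) (φ i)) →
      CharD Δ (.prob n (fun i => Δ (s i)) φ)
end

mutual
/-- `CharSL s ψ` : `ψ` is an L-characteristic formula `ψ_s` of the state `s`. -/
inductive CharSL : {A : Type} → SCSP A → Form A → Prop where
  | noTau {A : Type} {s : SCSP A} (n : ℕ) (a : Fin n → A)
      (Δ : Fin n → Wt (SCSP A)) (φ : Fin n → Form A) :
      (∀ Θ, ¬ Step s none Θ) →
      (∀ i, Step s (some (a i)) (Δ i)) →
      (∀ b Θ, Step s (some b) Θ → ∃ i, a i = b ∧ Δ i = Θ) →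
      (∀ i, CharDL (Δ i) (φ i)) →
      CharSL s (.conj n (fun i => .dia (a i) (φ i)))
  | tau {A : Type} {s : SCSP A} (n m : ℕ) (a : Fin n → A)
      (Δ : Fin n → Wt (SCSP A)) (φ : Fin n → Form A)
      (Θs : Fin m → Wt (SCSP A)) (ψ : Fin m → Form A) :
      (∃ Θ, Step s none Θ) →
      (∀ i, Step s (some (a i)) (Δ i)) →
      (∀ b Θ, Step s (some b) Θ → ∃ i, a i = b ∧ Δ i = Θ) →
      (∀ j, Step s none (Θs j)) →
      (∀ Θ, Step s none Θ → ∃ j, Θs j = Θ) →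
      (∀ i, CharDL (Δ i) (φ i)) →
      (∀ j, CharDL (Θs j) (ψ j)) →
      CharSL s (.conj (n+m) (Fin.append (fun i => .dia (a i) (φ i)) ψ))
/-- `CharDL Δ ψ` : `ψ` is an L-characteristic formula `ψ_Δ` of the distribution `Δ`. -/
inductive CharDL : {A : Type} → Wt (SCSP A) → Form A → Prop where
  | mk {A : Type} {Δ : Wt (SCSP A)} (n : ℕ) (s : Fin n → SCSP A) (φ : Fin n → Form A) :
      Function.Injective s →
      (∀ i, s i ∈ dsupp Δ) →
      (∀ t ∈ dsupp Δ, ∃ i, s i = t) →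
      (∀ i, CharSL (s i) (φ i)) →
      CharDL Δ (.prob n (fun i => Δ (s i)) φ)
end
/-! ### The sub-language nCSP and (in)equational theories -/

mutual
/-- Membership in `nCSP`: no parallel composition. -/
inductive PNoPar : {A : Type} → PCSP A → Prop where
  | st {A : Type} {s : SCSP A} : SNoPar s → PNoPar (.st s)
  | pch {A : Type} {p : ℝ} {P Q : PCSP A} : PNoPar P → PNoPar Q → PNoPar (.pch p P Q)
inductive SNoPar : {A : Type} → SCSP A → Prop where
  | nil {A : Type} : SNoPar (SCSP.nil (A := A))
  | pre {A : Type} {a : A} {P} : PNoPar P → SNoPar (.pre a P)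
  | ich {A : Type} {P Q : PCSP A} : PNoPar P → PNoPar Q → SNoPar (.ich P Q)
  | ech {A : Type} {s t : SCSP A} : SNoPar s → SNoPar t → SNoPar (.ech s t)
end

/-- Initial actions of a state-based term (`none` denotes τ). -/
def initsS {A : Type} : SCSP A → Set (Option A)
  | .nil => ∅
  | .pre a _ => {some a}
  | .ich _ _ => {none}
  | .ech s t => initsS s ∪ initsS t
  | .par _ s t => initsS s ∪ initsS t

/-- Initial actions of a process term. -/
def initsP {A : Type} : PCSP A → Set (Option A)
  | .st s => initsS s
  | .pch _ P Q => initsP P ∪ initsP Q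

/-- Derivability in the equational theory `=_E` of Figure 3. -/
inductive EqE {A : Type} : PCSP A → PCSP A → Prop where
  | refl (P) : EqE P P
  | symm {P Q} : EqE P Q → EqE Q P
  | trans {P Q R} : EqE P Q → EqE Q R → EqE P R
  | congPre (a : A) {P Q} : EqE P Q → EqE (.st (.pre a P)) (.st (.pre a Q))
  | congIch {P₁ P₂ Q₁ Q₂} : EqE P₁ Q₁ → EqE P₂ Q₂ →
      EqE (.st (.ich P₁ P₂)) (.st (.ich Q₁ Q₂))
  | congEch {P₁ P₂ Q₁ Q₂} : EqE P₁ Q₁ → EqE P₂ Q₂ →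
      EqE (echC P₁ P₂) (echC Q₁ Q₂)
  | congPch (p : ℝ) {P₁ P₂ Q₁ Q₂} : EqE P₁ Q₁ → EqE P₂ Q₂ →
      EqE (.pch p P₁ P₂) (.pch p Q₁ Q₂)
  | P1 (p : ℝ) (h₀ : 0 < p) (h₁ : p < 1) (P) : EqE (.pch p P P) P
  | P2 (p : ℝ) (h₀ : 0 < p) (h₁ : p < 1) (P Q) :
      EqE (.pch p P Q) (.pch (1-p) Q P)
  | P3 (p q : ℝ) (hp₀ : 0 < p) (hp₁ : p < 1) (hq₀ : 0 < q) (hq₁ : q < 1) (P Q R) :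
      EqE (.pch q (.pch p P Q) R)
          (.pch (p*q) P (.pch ((1-p)*q/(1-p*q)) Q R))
  | I1 (P) : EqE (.st (.ich P P)) P
  | I2 (P Q) : EqE (.st (.ich P Q)) (.st (.ich Q P))
  | I3 (P Q R) : EqE (.st (.ich (.st (.ich P Q)) R)) (.st (.ich P (.st (.ich Q R))))
  | E1 (P) : EqE (echC P (.st .nil)) P
  | E2 (P Q) : EqE (echC P Q) (echC Q P)
  | E3 (P Q R) : EqE (echC (echC P Q) R) (echC P (echC Q R))
  | EI (a : A) (P Q) :
      EqE (echC (.st (.pre a P)) (.st (.pre a Q)))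
          (.st (.ich (.st (.pre a P)) (.st (.pre a Q))))
  | D1 (p : ℝ) (h₀ : 0 < p) (h₁ : p < 1) (P Q R) :
      EqE (echC P (.pch p Q R)) (.pch p (echC P Q) (echC P R))
  | D2 (a : A) (P Q R) :
      EqE (echC (.st (.pre a P)) (.st (.ich Q R)))
          (.st (.ich (echC (.st (.pre a P)) Q) (echC (.st (.pre a P)) R)))
  | D3 (P₁ P₂ Q₁ Q₂) :
      EqE (echC (.st (.ich P₁ P₂)) (.st (.ich Q₁ Q₂)))
          (.st (.ich
            (.st (.ich (echC P₁ (.st (.ich Q₁ Q₂))) (echC P₂ (.st (.ich Q₁ Q₂)))))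
            (.st (.ich (echC (.st (.ich P₁ P₂)) Q₁) (echC (.st (.ich P₁ P₂)) Q₂)))))

/-- Derivability from the probabilistic axioms P1–P3 and D1 only (`=_prob`). -/
inductive EqProb {A : Type} : PCSP A → PCSP A → Prop where
  | refl (P) : EqProb P P
  | symm {P Q} : EqProb P Q → EqProb Q P
  | trans {P Q R} : EqProb P Q → EqProb Q R → EqProb P R
  | congPre (a : A) {P Q} : EqProb P Q → EqProb (.st (.pre a P)) (.st (.pre a Q))
  | congIch {P₁ P₂ Q₁ Q₂} : EqProb P₁ Q₁ → EqProb P₂ Q₂ →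
      EqProb (.st (.ich P₁ P₂)) (.st (.ich Q₁ Q₂))
  | congEch {P₁ P₂ Q₁ Q₂} : EqProb P₁ Q₁ → EqProb P₂ Q₂ →
      EqProb (echC P₁ P₂) (echC Q₁ Q₂)
  | congPch (p : ℝ) {P₁ P₂ Q₁ Q₂} : EqProb P₁ Q₁ → EqProb P₂ Q₂ →
      EqProb (.pch p P₁ P₂) (.pch p Q₁ Q₂)
  | P1 (p : ℝ) (h₀ : 0 < p) (h₁ : p < 1) (P) : EqProb (.pch p P P) P
  | P2 (p : ℝ) (h₀ : 0 < p) (h₁ : p < 1) (P Q) :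
      EqProb (.pch p P Q) (.pch (1-p) Q P)
  | P3 (p q : ℝ) (hp₀ : 0 < p) (hp₁ : p < 1) (hq₀ : 0 < q) (hq₁ : q < 1) (P Q R) :
      EqProb (.pch q (.pch p P Q) R)
          (.pch (p*q) P (.pch ((1-p)*q/(1-p*q)) Q R))
  | D1 (p : ℝ) (h₀ : 0 < p) (h₁ : p < 1) (P Q R) :
      EqProb (echC P (.pch p Q R)) (.pch p (echC P Q) (echC P R))

mutual
/-- Normal forms. -/
inductive IsNF : {A : Type} → PCSP A → Prop where
  | pch {A : Type} {p : ℝ} {N₁ N₂ : PCSP A} : 0 < p → p < 1 →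
      IsNF N₁ → IsNF N₂ → IsNF (.pch p N₁ N₂)
  | ich {A : Type} {N₁ N₂ : PCSP A} : IsNF N₁ → IsNF N₂ → IsNF (.st (.ich N₁ N₂))
  | ext {A : Type} {s : SCSP A} : IsExtNF s → IsNF (.st s)
/-- External-choice normal forms `◻_{i∈I} a_i.N_i`. -/
inductive IsExtNF : {A : Type} → SCSP A → Prop where
  | nil {A : Type} : IsExtNF (SCSP.nil (A := A))
  | pre {A : Type} {a : A} {N} : IsNF N → IsExtNF (.pre a N)
  | ech {A : Type} {s t : SCSP A} : IsExtNF s → IsExtNF t → IsExtNF (.ech s t)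
end

/-- Derivability in the inequational theory for may testing (`⊑_Emay`). -/
inductive LeMay {A : Type} : PCSP A → PCSP A → Prop where
  | ofEq {P Q} : EqE P Q → LeMay P Q
  | trans {P Q R} : LeMay P Q → LeMay Q R → LeMay P R
  | congPre (a : A) {P Q} : LeMay P Q → LeMay (.st (.pre a P)) (.st (.pre a Q))
  | congIch {P₁ P₂ Q₁ Q₂} : LeMay P₁ Q₁ → LeMay P₂ Q₂ →
      LeMay (.st (.ich P₁ P₂)) (.st (.ich Q₁ Q₂))
  | congEch {P₁ P₂ Q₁ Q₂} : LeMay P₁ Q₁ → LeMay P₂ Q₂ →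
      LeMay (echC P₁ P₂) (echC Q₁ Q₂)
  | congPch (p : ℝ) {P₁ P₂ Q₁ Q₂} : LeMay P₁ Q₁ → LeMay P₂ Q₂ →
      LeMay (.pch p P₁ P₂) (.pch p Q₁ Q₂)
  | may0 (a b : A) (P Q) :
      LeMay (echC (.st (.pre a P)) (.st (.pre b Q)))
            (.st (.ich (.st (.pre a P)) (.st (.pre b Q))))
  | may0' (a b : A) (P Q) :
      LeMay (.st (.ich (.st (.pre a P)) (.st (.pre b Q))))
            (echC (.st (.pre a P)) (.st (.pre b Q)))
  | may1 (P Q) : LeMay P (.st (.ich P Q))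
  | may2 (P) : LeMay (.st .nil) P
  | may3 (a : A) (p : ℝ) (h₀ : 0 < p) (h₁ : p < 1) (P Q) :
      LeMay (.st (.pre a (.pch p P Q))) (.pch p (.st (.pre a P)) (.st (.pre a Q)))

/-- Derivability in the inequational theory for must testing (`⊑_Emust`). -/
inductive LeMust {A : Type} : PCSP A → PCSP A → Prop where
  | ofEq {P Q} : EqE P Q → LeMust P Q
  | trans {P Q R} : LeMust P Q → LeMust Q R → LeMust P R
  | congPre (a : A) {P Q} : LeMust P Q → LeMust (.st (.pre a P)) (.st (.pre a Q))
  | congIch {P₁ P₂ Q₁ Q₂} : LeMust P₁ Q₁ → LeMust P₂ Q₂ →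
      LeMust (.st (.ich P₁ P₂)) (.st (.ich Q₁ Q₂))
  | congEch {P₁ P₂ Q₁ Q₂} : LeMust P₁ Q₁ → LeMust P₂ Q₂ →
      LeMust (echC P₁ P₂) (echC Q₁ Q₂)
  | congPch (p : ℝ) {P₁ P₂ Q₁ Q₂} : LeMust P₁ Q₁ → LeMust P₂ Q₂ →
      LeMust (.pch p P₁ P₂) (.pch p Q₁ Q₂)
  | must1 (P Q) : LeMust (.st (.ich P Q)) Q
  | must2 (n : ℕ) (a : Fin (n+1) → A) (m : Fin (n+1) → ℕ)
      (p : (i : Fin (n+1)) → Fin (m i + 1) → ℝ)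
      (Q : (i : Fin (n+1)) → Fin (m i + 1) → PCSP A)
      (P : (i : Fin (n+1)) → Fin (m i + 1) → PCSP A)
      (R : PCSP A) :
      (∀ i j, 0 ≤ p i j) → (∀ i, ∑ j, p i j = 1) →
      initsP R ⊆ {α | ∃ i, α = some (a i)} →
      LeMust
        (.st (.ich R (ichFin n (fun i =>
          pchFin (m i) (p i) (fun j => echC (.st (.pre (a i) (Q i j))) (P i j))))))
        (.st (echFin n (fun i => .pre (a i) (pchFin (m i) (p i) (Q i)))))

/-! Replace every success prefix `ω.P` of a test `T` by `τ.ω.0`, giving `T'`. A translated state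
never enables `ω` itself: where a state of `T ‖ P` offers `ω` (worth `1` for `V̄`), its
translation instead has a τ-step to states offering `ω` (worth `1` for `V`), and all other steps
of the two correspond. Since the translation may identify distinct states, outcomes correspond
only up to bracketing: each outcome of `Ā(T, P)` lies between two outcomes of `A(T', P)`, and
vice versa. So `A(T', ·)` can stand in for `Ā(T, ·)` in both the Hoare and the Smyth preorder,
and each action-based preorder follows from the state-based one tested with `T'`.
-/

section Distributions

variable {X Y Z X' Y' : Type} {Δ : Wt X}

lemma finsum_fiberwise {φ : X → ℝ} (hφ : (Function.support φ).Finite) (g : X → Y) :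
    ∑ᶠ y, ∑ᶠ x ∈ {x | g x = y}, φ x = ∑ᶠ x, φ x := by
  classical
  set s := hφ.toFinset
  have hfib (y : Y) : ∑ᶠ x ∈ {x | g x = y}, φ x = ∑ x ∈ s with g x = y, φ x :=
    finsum_mem_eq_sum_filter φ _ hφ
  rw [finsum_congr hfib, finsum_eq_sum_of_support_subset φ (s := s) (by simp [s]),
    finsum_eq_sum_of_support_subset _ (s := s.image g),
    Finset.sum_fiberwise_of_maps_to fun x hx => Finset.mem_image_of_mem g hx]
  intro y hy
  obtain ⟨x, hx, -⟩ := Finset.exists_ne_zero_of_sum_ne_zero hy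
  rw [Finset.mem_filter] at hx
  exact Finset.mem_coe.2 (hx.2 ▸ Finset.mem_image_of_mem g hx.1)

lemma finsum_prod_mul {F : X → ℝ} {G : Y → ℝ} (hF : (Function.support F).Finite)
    (hG : (Function.support G).Finite) :
    ∑ᶠ q : X × Y, F q.1 * G q.2 = (∑ᶠ x, F x) * ∑ᶠ y, G y := by
  rw [finsum_curry _ ((hF.prod hG).subset fun q hq => ?_), finsum_mul]
  · simp_rw [mul_finsum]
  · simp only [Function.mem_support, ne_eq, mul_eq_zero, not_or] at hq
    exact hq

lemma dsupp_dirac (x : X) : dsupp (dirac x) = {x} := by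
  ext y
  by_cases h : y = x <;> simp [dsupp, dirac, h]

lemma dsupp_convex_subset (p q : ℝ) (Δ₁ Δ₂ : Wt X) :
    dsupp (fun x => p * Δ₁ x + q * Δ₂ x) ⊆ dsupp Δ₁ ∪ dsupp Δ₂ := by
  intro x hx
  by_contra h
  simp only [Set.mem_union, dsupp, Function.mem_support, not_or, not_not] at h
  simp [dsupp, h.1, h.2] at hx

lemma dsupp_prod_subset (Δ₁ : Wt X) (Δ₂ : Wt Y) :
    dsupp (fun q : X × Y => Δ₁ q.1 * Δ₂ q.2) ⊆ dsupp Δ₁ ×ˢ dsupp Δ₂ := by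
  intro q hq
  simpa [dsupp, not_or] using hq

lemma dmap_apply (g : X → Y) (Δ : Wt X) (y : Y) :
    dmap g Δ y = ∑ᶠ x, if g x = y then Δ x else 0 := by
  rw [dmap, finsum_mem_def]
  simp only [Set.indicator_apply, Set.mem_ofPred_eq]

lemma dsupp_dmap_subset (g : X → Y) (Δ : Wt X) : dsupp (dmap g Δ) ⊆ g '' dsupp Δ := by
  intro y hy
  by_contra hne
  refine hy (finsum_mem_eq_zero_of_forall_eq_zero fun x hx => ?_)
  by_contra h0
  exact hne ⟨x, h0, hx⟩

lemma dsupp_dmap_finite (hΔ : (dsupp Δ).Finite) (g : X → Y) : (dsupp (dmap g Δ)).Finite :=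
  (hΔ.image g).subset (dsupp_dmap_subset g Δ)

lemma forall_dsupp_dmap {p : Y → Prop} {g : X → Y} (h : ∀ x ∈ dsupp Δ, p (g x)) :
    ∀ y ∈ dsupp (dmap g Δ), p y := by
  intro y hy
  obtain ⟨x, hx, rfl⟩ := dsupp_dmap_subset g Δ hy
  exact h x hx

lemma map_mem_dsupp_dmap (h₀ : ∀ x, 0 ≤ Δ x) (hΔ : (dsupp Δ).Finite) (g : X → Y) {x : X}
    (hx : x ∈ dsupp Δ) : g x ∈ dsupp (dmap g Δ) := by
  have hle : Δ x ≤ dmap g Δ (g x) := by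
    rw [dmap_apply]
    refine (single_le_finsum (f := fun z => if g z = g x then Δ z else 0) x
      (hΔ.subset fun z hz => ?_) fun z => ?_).trans_eq' (by simp)
    · by_contra h
      simp [Function.mem_support, not_not.1 h] at hz
    · split_ifs
      exacts [h₀ z, le_rfl]
  exact ((lt_of_le_of_ne (h₀ x) (Ne.symm hx)).trans_le hle).ne'

lemma dexp_dirac (x : X) (f : X → ℝ) : dexp (dirac x) f = f x := by
  rw [dexp, finsum_eq_single _ x fun y hy => by simp [dirac, hy]]
  simp [dirac]

lemma dexp_one (Δ : Wt X) : dexp Δ (fun _ => 1) = ∑ᶠ x, Δ x := by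
  simp [dexp]

lemma dexp_eq_mass {f : X → ℝ} (hf : ∀ x ∈ dsupp Δ, f x = 1) : dexp Δ f = ∑ᶠ x, Δ x := by
  rw [← dexp_one]
  refine finsum_congr fun x => ?_
  by_cases hx : Δ x = 0
  · simp [hx]
  · simp [hf x hx]

lemma dexp_mono (h₀ : ∀ x, 0 ≤ Δ x) (hΔ : (dsupp Δ).Finite) {f g : X → ℝ}
    (h : ∀ x ∈ dsupp Δ, f x ≤ g x) : dexp Δ f ≤ dexp Δ g := by
  refine finsum_le_finsum' (hΔ.subset (Function.support_mul_subset_left _ _))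
    (hΔ.subset (Function.support_mul_subset_left _ _)) fun x => ?_
  by_cases hx : Δ x = 0
  · simp [hx]
  · exact mul_le_mul_of_nonneg_left (h x hx) (h₀ x)

lemma dexp_convex {Δ₁ Δ₂ : Wt X} (h₁ : (dsupp Δ₁).Finite) (h₂ : (dsupp Δ₂).Finite)
    (p q : ℝ) (f : X → ℝ) :
    dexp (fun x => p * Δ₁ x + q * Δ₂ x) f = p * dexp Δ₁ f + q * dexp Δ₂ f := by
  simp only [dexp, add_mul, mul_assoc]
  rw [finsum_add_distrib, mul_finsum, mul_finsum]
  · exact h₁.subset ((Function.support_mul_subset_right _ _).trans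
      (Function.support_mul_subset_left _ _))
  · exact h₂.subset ((Function.support_mul_subset_right _ _).trans
      (Function.support_mul_subset_left _ _))

lemma dexp_prod {Δ₁ : Wt X} {Δ₂ : Wt Y} (h₁ : (dsupp Δ₁).Finite) (h₂ : (dsupp Δ₂).Finite)
    (f₁ : X → ℝ) (f₂ : Y → ℝ) :
    dexp (fun q : X × Y => Δ₁ q.1 * Δ₂ q.2) (fun q => f₁ q.1 * f₂ q.2) =
      dexp Δ₁ f₁ * dexp Δ₂ f₂ := by
  rw [dexp, dexp, dexp, ← finsum_prod_mul (h₁.subset (Function.support_mul_subset_left _ _))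
    (h₂.subset (Function.support_mul_subset_left _ _))]
  exact finsum_congr fun q => by ring

lemma dexp_dmap (hΔ : (dsupp Δ).Finite) (g : X → Y) (f : Y → ℝ) :
    dexp (dmap g Δ) f = dexp Δ (fun x => f (g x)) := by
  have hfib (y : Y) : dmap g Δ y * f y = ∑ᶠ x ∈ {x | g x = y}, Δ x * f (g x) := by
    rw [dmap, finsum_mem_mul]
    exact finsum_mem_congr rfl fun x hx => by rw [hx]
  simp only [dexp, hfib]
  exact finsum_fiberwise (hΔ.subset (Function.support_mul_subset_left _ _)) g

lemma dmap_apply_eq_dexp (g : X → Y) (Δ : Wt X) (y : Y) :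
    dmap g Δ y = dexp Δ (fun x => if g x = y then 1 else 0) := by
  simp only [dmap_apply, dexp, mul_ite, mul_one, mul_zero]

lemma dmap_dmap (hΔ : (dsupp Δ).Finite) (g : Y → Z) (h : X → Y) :
    dmap g (dmap h Δ) = dmap (fun x => g (h x)) Δ := by
  funext z
  rw [dmap_apply_eq_dexp, dexp_dmap hΔ, dmap_apply_eq_dexp]

lemma dmap_dirac (g : X → Y) (x : X) : dmap g (dirac x) = dirac (g x) := by
  funext y
  rw [dmap_apply_eq_dexp, dexp_dirac]
  simp only [dirac, eq_comm]

lemma dmap_eq_self {g : X → X} (h : ∀ x ∈ dsupp Δ, g x = x) : dmap g Δ = Δ := by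
  funext y
  rw [dmap_apply, finsum_eq_single _ y fun x hxy => ?_]
  · by_cases hy : Δ y = 0
    · simp [hy]
    · simp [h y hy]
  · by_cases hx : Δ x = 0
    · simp [hx]
    · simp [h x hx, hxy]

lemma dmap_convex {Δ₁ Δ₂ : Wt X} (h₁ : (dsupp Δ₁).Finite) (h₂ : (dsupp Δ₂).Finite)
    (p q : ℝ) (g : X → Y) :
    dmap g (fun x => p * Δ₁ x + q * Δ₂ x) = fun y => p * dmap g Δ₁ y + q * dmap g Δ₂ y := by
  funext y
  simp only [dmap_apply_eq_dexp, dexp_convex h₁ h₂]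

lemma dmap_prod {Δ₁ : Wt X} {Δ₂ : Wt Y} (h₁ : (dsupp Δ₁).Finite) (h₂ : (dsupp Δ₂).Finite)
    (g₁ : X → X') (g₂ : Y → Y') :
    (fun q : X' × Y' => dmap g₁ Δ₁ q.1 * dmap g₂ Δ₂ q.2) =
      dmap (Prod.map g₁ g₂) (fun q => Δ₁ q.1 * Δ₂ q.2) := by
  funext q
  simp only [dmap_apply_eq_dexp, ← dexp_prod h₁ h₂]
  congr 1
  funext x
  split_ifs <;> simp_all [Prod.ext_iff]

lemma isDist_dirac (x : X) : IsDist (dirac x) := by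
  refine ⟨fun y => ?_, by simp [dsupp_dirac], ?_⟩
  · by_cases h : y = x <;> simp [dirac, h]
  · rw [← dexp_one, dexp_dirac]

lemma IsDist.dmap (hΔ : IsDist Δ) (g : X → Y) : IsDist (dmap g Δ) := by
  refine ⟨fun y => ?_, dsupp_dmap_finite hΔ.2.1 g, ?_⟩
  · rw [dmap_apply]
    exact finsum_nonneg fun x => by split_ifs; exacts [hΔ.1 x, le_rfl]
  · rw [← dexp_one, dexp_dmap hΔ.2.1, dexp_one, hΔ.2.2]

lemma IsDist.prod {Δ₁ : Wt X} {Δ₂ : Wt Y} (h₁ : IsDist Δ₁) (h₂ : IsDist Δ₂) :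
    IsDist (fun q : X × Y => Δ₁ q.1 * Δ₂ q.2) := by
  refine ⟨fun q => mul_nonneg (h₁.1 q.1) (h₂.1 q.2),
    (h₁.2.1.prod h₂.2.1).subset (dsupp_prod_subset Δ₁ Δ₂), ?_⟩
  have := dexp_prod h₁.2.1 h₂.2.1 (fun _ => 1) (fun _ => 1)
  simp only [dexp_one, mul_one, h₁.2.2, h₂.2.2] at this
  exact this

lemma IsDist.convex {Δ₁ Δ₂ : Wt X} (h₁ : IsDist Δ₁) (h₂ : IsDist Δ₂) {p : ℝ} (hp₀ : 0 ≤ p)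
    (hp₁ : p ≤ 1) : IsDist (fun x => p * Δ₁ x + (1 - p) * Δ₂ x) := by
  refine ⟨fun x => ?_, (h₁.2.1.union h₂.2.1).subset (dsupp_convex_subset _ _ _ _), ?_⟩
  · have := h₁.1 x
    have := h₂.1 x
    nlinarith
  · rw [← dexp_one, dexp_convex h₁.2.1 h₂.2.1, dexp_one, dexp_one, h₁.2.2, h₂.2.2]
    ring

end Distributions

section Bracketing

variable {X Y : Type} {Δ : Wt X}

def Bracketed (S : Set ℝ) (r : ℝ) : Prop := (∃ y ∈ S, r ≤ y) ∧ ∃ y ∈ S, y ≤ r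

lemma Bracketed.of_mem {S : Set ℝ} {r : ℝ} (h : r ∈ S) : Bracketed S r :=
  ⟨⟨r, h, le_rfl⟩, ⟨r, h, le_rfl⟩⟩

lemma Bracketed.mono {S T : Set ℝ} {r : ℝ} (h : Bracketed S r) (hST : S ⊆ T) : Bracketed T r :=
  ⟨let ⟨y, hy, hr⟩ := h.1; ⟨y, hST hy, hr⟩, let ⟨y, hy, hr⟩ := h.2; ⟨y, hST hy, hr⟩⟩

lemma hoareLE_of_forall_bracketed {R S : Set ℝ} (h : ∀ r ∈ R, Bracketed S r) : HoareLE R S :=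
  fun r hr => (h r hr).1

lemma smythLE_of_forall_bracketed {R S : Set ℝ} (h : ∀ r ∈ R, Bracketed S r) : SmythLE S R :=
  fun r hr => (h r hr).2

lemma HoareLE.trans {R S U : Set ℝ} (h₁ : HoareLE R S) (h₂ : HoareLE S U) : HoareLE R U := by
  intro r hr
  obtain ⟨s, hs, hrs⟩ := h₁ r hr
  obtain ⟨u, hu, hsu⟩ := h₂ s hs
  exact ⟨u, hu, hrs.trans hsu⟩

lemma SmythLE.trans {R S U : Set ℝ} (h₁ : SmythLE R S) (h₂ : SmythLE S U) : SmythLE R U := by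
  intro u hu
  obtain ⟨s, hs, hsu⟩ := h₂ u hu
  obtain ⟨r, hr, hrs⟩ := h₁ s hs
  exact ⟨r, hr, hrs.trans hsu⟩

-- `VD w Δ` and `VBarD w Δ` are `dexpChoices Δ` of the outcome sets of single states.
def dexpChoices (Δ : Wt X) (S : X → Set ℝ) : Set ℝ :=
  {r | ∃ f : X → ℝ, (∀ t ∈ dsupp Δ, f t ∈ S t) ∧ r = dexp Δ f}

-- Distinct states of a fibre of `g` may carry different values; the extreme ones are used.
lemma bracketed_dexpChoices_dmap (h₀ : ∀ x, 0 ≤ Δ x) (hΔ : (dsupp Δ).Finite) (g : X → Y)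
    {S : Y → Set ℝ} {f : X → ℝ} (h : ∀ x ∈ dsupp Δ, Bracketed (S (g x)) (f x)) :
    Bracketed (dexpChoices (dmap g Δ) S) (dexp Δ f) := by
  have hfin (y : Y) : {x | x ∈ dsupp Δ ∧ g x = y}.Finite := hΔ.subset fun x hx => hx.1
  constructor
  · have key : ∀ y ∈ dsupp (dmap g Δ), ∃ r ∈ S y, ∀ x ∈ dsupp Δ, g x = y → f x ≤ r := by
      intro y hy
      obtain ⟨x₀, ⟨hx₀, rfl⟩, hmax⟩ :=
        Set.exists_max_image _ f (hfin y) (dsupp_dmap_subset g Δ hy)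
      obtain ⟨r, hr, hle⟩ := (h x₀ hx₀).1
      exact ⟨r, hr, fun x hx hgx => (hmax x ⟨hx, hgx⟩).trans hle⟩
    choose! F hFS hFle using key
    refine ⟨_, ⟨F, hFS, rfl⟩, ?_⟩
    rw [dexp_dmap hΔ]
    exact dexp_mono h₀ hΔ fun x hx => hFle _ (map_mem_dsupp_dmap h₀ hΔ g hx) x hx rfl
  · have key : ∀ y ∈ dsupp (dmap g Δ), ∃ r ∈ S y, ∀ x ∈ dsupp Δ, g x = y → r ≤ f x := by
      intro y hy
      obtain ⟨x₀, ⟨hx₀, rfl⟩, hmin⟩ :=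
        Set.exists_min_image _ f (hfin y) (dsupp_dmap_subset g Δ hy)
      obtain ⟨r, hr, hle⟩ := (h x₀ hx₀).2
      exact ⟨r, hr, fun x hx hgx => hle.trans (hmin x ⟨hx, hgx⟩)⟩
    choose! F hFS hFle using key
    refine ⟨_, ⟨F, hFS, rfl⟩, ?_⟩
    rw [dexp_dmap hΔ]
    exact dexp_mono h₀ hΔ fun x hx => hFle _ (map_mem_dsupp_dmap h₀ hΔ g hx) x hx rfl

lemma bracketed_dexpChoices (h₀ : ∀ x, 0 ≤ Δ x) (hΔ : (dsupp Δ).Finite) {S : X → Set ℝ}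
    {f : X → ℝ} (h : ∀ x ∈ dsupp Δ, Bracketed (S x) (f x)) :
    Bracketed (dexpChoices Δ S) (dexp Δ f) := by
  simpa only [dmap_eq_self (g := id) fun _ _ => rfl] using
    bracketed_dexpChoices_dmap h₀ hΔ id h

end Bracketing

section WellFormed

variable {B C : Type}

lemma PCSP.interp_finite : ∀ P : PCSP B, (dsupp P.interp).Finite
  | .st s => by simp [PCSP.interp, dsupp_dirac]
  | .pch _ P Q => (P.interp_finite.union Q.interp_finite).subset (dsupp_convex_subset _ _ _ _)

lemma PWF.isDist_interp : ∀ {P : PCSP B}, PWF P → IsDist P.interp ∧ ∀ t ∈ dsupp P.interp, SWF t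
  | .st _, .st hs => ⟨isDist_dirac _, by simpa [PCSP.interp, dsupp_dirac] using hs⟩
  | .pch _ _ _, .pch hp₀ hp₁ hP hQ => by
    obtain ⟨hdP, hsP⟩ := hP.isDist_interp
    obtain ⟨hdQ, hsQ⟩ := hQ.isDist_interp
    refine ⟨hdP.convex hdQ hp₀.le hp₁.le, fun t ht => ?_⟩
    rcases dsupp_convex_subset _ _ _ _ ht with ht | ht
    exacts [hsP t ht, hsQ t ht]

lemma Step.dsupp_finite {s : SCSP B} {α : Option B} {Δ : Wt (SCSP B)} (h : Step s α Δ) :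
    (dsupp Δ).Finite := by
  induction h with
  | pre _ P | ichL P _ | ichR _ P => exact P.interp_finite
  | echL _ ih | echR _ ih => exact ih
  | echTL _ ih | echTR _ ih | parL _ _ ih | parR _ _ ih => exact dsupp_dmap_finite ih _
  | parS _ _ _ ih₁ ih₂ =>
    exact dsupp_dmap_finite ((ih₁.prod ih₂).subset (dsupp_prod_subset _ _)) _

lemma Step.isDist {s : SCSP B} {α : Option B} {Δ : Wt (SCSP B)} (h : Step s α Δ)
    (hs : SWF s) : IsDist Δ ∧ ∀ t ∈ dsupp Δ, SWF t := by
  induction h with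
  | pre _ P => cases hs with | pre hP => exact hP.isDist_interp
  | ichL P Q => cases hs with | ich hP _ => exact hP.isDist_interp
  | ichR P Q => cases hs with | ich _ hQ => exact hQ.isDist_interp
  | echL _ ih => cases hs with | ech h₁ _ => exact ih h₁
  | echR _ ih => cases hs with | ech _ h₂ => exact ih h₂
  | echTL _ ih =>
    cases hs with
    | ech h₁ h₂ =>
      obtain ⟨hd, hsw⟩ := ih h₁
      exact ⟨hd.dmap _, forall_dsupp_dmap fun t ht => (hsw t ht).ech h₂⟩
  | echTR _ ih =>
    cases hs with
    | ech h₁ h₂ =>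
      obtain ⟨hd, hsw⟩ := ih h₂
      exact ⟨hd.dmap _, forall_dsupp_dmap fun t ht => h₁.ech (hsw t ht)⟩
  | parL _ _ ih =>
    cases hs with
    | par h₁ h₂ =>
      obtain ⟨hd, hsw⟩ := ih h₁
      exact ⟨hd.dmap _, forall_dsupp_dmap fun t ht => (hsw t ht).par h₂⟩
  | parR _ _ ih =>
    cases hs with
    | par h₁ h₂ =>
      obtain ⟨hd, hsw⟩ := ih h₂
      exact ⟨hd.dmap _, forall_dsupp_dmap fun t ht => h₁.par (hsw t ht)⟩
  | parS _ _ _ ih₁ ih₂ =>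
    cases hs with
    | par h₁ h₂ =>
      obtain ⟨hd₁, hsw₁⟩ := ih₁ h₁
      obtain ⟨hd₂, hsw₂⟩ := ih₂ h₂
      refine ⟨(hd₁.prod hd₂).dmap _, forall_dsupp_dmap fun q hq => ?_⟩
      obtain ⟨hq₁, hq₂⟩ := dsupp_prod_subset _ _ hq
      exact (hsw₁ _ hq₁).par (hsw₂ _ hq₂)

mutual
theorem PWF.mapP (f : B → C) : ∀ {P : PCSP B}, PWF P → PWF (mapP f P)
  | .st _, .st hs => .st (hs.mapS f)
  | .pch _ _ _, .pch hp₀ hp₁ hP hQ => .pch hp₀ hp₁ (hP.mapP f) (hQ.mapP f)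
theorem SWF.mapS (f : B → C) : ∀ {s : SCSP B}, SWF s → SWF (mapS f s)
  | .nil, .nil => .nil
  | .pre _ _, .pre hP => .pre (hP.mapP f)
  | .ich _ _, .ich hP hQ => .ich (hP.mapP f) (hQ.mapP f)
  | .ech _ _, .ech hs ht => .ech (hs.mapS f) (ht.mapS f)
  | .par _ _ _, .par hs ht => .par (hs.mapS f) (ht.mapS f)
end

theorem SWF.parCS (D : Set B) {s : SCSP B} (hs : SWF s) :
    ∀ {P : PCSP B}, PWF P → PWF (parCS D s P)
  | .st _, .st ht => .st (hs.par ht)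
  | .pch _ _ _, .pch hp₀ hp₁ hP hQ => .pch hp₀ hp₁ (hs.parCS D hP) (hs.parCS D hQ)

theorem PWF.parC (D : Set B) {Q : PCSP B} (hQ : PWF Q) :
    ∀ {P : PCSP B}, PWF P → PWF (parC D P Q)
  | .st _, .st hs => hs.parCS D hQ
  | .pch _ _ _, .pch hp₀ hp₁ hP₁ hP₂ => .pch hp₀ hp₁ (hQ.parC D hP₁) (hQ.parC D hP₂)

theorem PWF.applyTest {T : PCSP (TAct B)} (hT : PWF T) {P : PCSP B} (hP : PWF P) :
    PWF (applyTest T P) :=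
  (hP.mapP Sum.inl).parC _ hT

end WellFormed

section Enables

variable {B : Type} {w : B} {s t : SCSP B}

def Enables (w : B) (s : SCSP B) : Prop := ∃ Θ, Step s (some w) Θ

lemma Enables.ech_left (h : Enables w s) : Enables w (.ech s t) :=
  let ⟨_, hΘ⟩ := h; ⟨_, .echL hΘ⟩

lemma Enables.ech_right (h : Enables w t) : Enables w (.ech s t) :=
  let ⟨_, hΘ⟩ := h; ⟨_, .echR hΘ⟩

lemma Enables.par_left {D : Set B} (hw : w ∉ D) (h : Enables w s) : Enables w (.par D s t) :=
  let ⟨_, hΘ⟩ := h; ⟨_, .parL hΘ fun _ ha => Option.some_inj.1 ha ▸ hw⟩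

lemma Enables.par_right {D : Set B} (hw : w ∉ D) (h : Enables w t) : Enables w (.par D s t) :=
  let ⟨_, hΘ⟩ := h; ⟨_, .parR hΘ fun _ ha => Option.some_inj.1 ha ▸ hw⟩

end Enables

section Delay

variable {A : Type}

def omegaNil : SCSP (TAct A) := .pre omA (.st .nil)

-- The syntax has no τ-prefix; `ω.0 ⊓ ω.0` plays the role of `τ.ω.0`.
def tauOmegaNil : SCSP (TAct A) := .ich (.st omegaNil) (.st omegaNil)

/- A parallel composition synchronising on `ω` is left alone: its `ω`-synchronisations are
τ-steps, which the translation must not disturb. -/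
mutual
def delayP : PCSP (TAct A) → PCSP (TAct A)
  | .st s => .st (delayS s)
  | .pch p P Q => .pch p (delayP P) (delayP Q)
def delayS : SCSP (TAct A) → SCSP (TAct A)
  | .nil => .nil
  | .pre (.inl a) P => .pre (.inl a) (delayP P)
  | .pre (.inr _) _ => tauOmegaNil
  | .ich P Q => .ich (delayP P) (delayP Q)
  | .ech s t => .ech (delayS s) (delayS t)
  | .par D s t => if omA ∈ D then .par D s t else .par D (delayS s) (delayS t)
end

lemma delayS_par_of_mem {D : Set (TAct A)} (hD : omA ∈ D) (s t : SCSP (TAct A)) :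
    delayS (.par D s t) = .par D s t := by
  simp [delayS, hD]

lemma delayS_par_of_notMem {D : Set (TAct A)} (hD : omA ∉ D) (s t : SCSP (TAct A)) :
    delayS (.par D s t) = .par D (delayS s) (delayS t) := by
  simp [delayS, hD]

lemma delayP_interp : ∀ P : PCSP (TAct A), (delayP P).interp = dmap delayS P.interp
  | .st s => (dmap_dirac delayS s).symm
  | .pch p P Q => by
    simp only [delayP, PCSP.interp, delayP_interp P, delayP_interp Q,
      dmap_convex P.interp_finite Q.interp_finite]

mutual
theorem PWF.delayP : ∀ {P : PCSP (TAct A)}, PWF P → PWF (delayP P)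
  | .st _, .st hs => .st hs.delayS
  | .pch _ _ _, .pch hp₀ hp₁ hP hQ => .pch hp₀ hp₁ hP.delayP hQ.delayP
theorem SWF.delayS : ∀ {s : SCSP (TAct A)}, SWF s → SWF (delayS s)
  | .nil, .nil => .nil
  | .pre (.inl _) _, .pre hP => .pre hP.delayP
  | .pre (.inr _) _, .pre _ => .ich (.st (.pre (.st .nil))) (.st (.pre (.st .nil)))
  | .ich _ _, .ich hP hQ => .ich hP.delayP hQ.delayP
  | .ech _ _, .ech hs ht => .ech hs.delayS ht.delayS
  | .par D _ _, .par hs ht => by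
    by_cases hD : omA ∈ D
    · rw [delayS_par_of_mem hD]
      exact hs.par ht
    · rw [delayS_par_of_notMem hD]
      exact hs.delayS.par ht.delayS
end

lemma omA_notMem_image_inl (X : Set A) : omA ∉ (Sum.inl '' X : Set (TAct A)) := by
  rintro ⟨x, -, hx⟩
  exact Sum.inl_ne_inr hx

mutual
lemma delayP_mapP_inl : ∀ P : PCSP A, delayP (mapP Sum.inl P) = mapP Sum.inl P
  | .st s => by simp only [mapP, delayP, delayS_mapS_inl s]
  | .pch p P Q => by simp only [mapP, delayP, delayP_mapP_inl P, delayP_mapP_inl Q]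
lemma delayS_mapS_inl : ∀ s : SCSP A, delayS (mapS Sum.inl s) = mapS Sum.inl s
  | .nil => rfl
  | .pre a P => by simp only [mapS, delayS, delayP_mapP_inl P]
  | .ich P Q => by simp only [mapS, delayS, delayP_mapP_inl P, delayP_mapP_inl Q]
  | .ech s t => by simp only [mapS, delayS, delayS_mapS_inl s, delayS_mapS_inl t]
  | .par X s t => by
    simp only [mapS, delayS_par_of_notMem (omA_notMem_image_inl X), delayS_mapS_inl s,
      delayS_mapS_inl t]
end

lemma delayP_parCS {D : Set (TAct A)} (hD : omA ∉ D) (s : SCSP (TAct A)) :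
    ∀ P : PCSP (TAct A), delayP (parCS D s P) = parCS D (delayS s) (delayP P)
  | .st t => by simp only [parCS, delayP, delayS_par_of_notMem hD]
  | .pch p P Q => by simp only [parCS, delayP, delayP_parCS hD s P, delayP_parCS hD s Q]

lemma delayP_parC {D : Set (TAct A)} (hD : omA ∉ D) (Q : PCSP (TAct A)) :
    ∀ P : PCSP (TAct A), delayP (parC D P Q) = parC D (delayP P) (delayP Q)
  | .st s => delayP_parCS hD s Q
  | .pch p P₁ P₂ => by simp only [parC, delayP, delayP_parC hD Q P₁, delayP_parC hD Q P₂]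

lemma delayP_applyTest (T : PCSP (TAct A)) (P : PCSP A) :
    delayP (applyTest T P) = applyTest (delayP T) P := by
  rw [applyTest, applyTest, delayP_parC, delayP_mapP_inl]
  simpa only [Set.image_univ] using omA_notMem_image_inl Set.univ

end Delay

section DelaySteps

variable {A : Type}

lemma Step.delay {u : SCSP (TAct A)} {α : Option (TAct A)} {Δ : Wt (SCSP (TAct A))}
    (h : Step u α Δ) (hα : α ≠ some omA) : Step (delayS u) α (dmap delayS Δ) := by
  induction h with
  | pre a P =>
    rcases a with a | ⟨⟩
    · rw [← delayP_interp]
      exact .pre _ _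
    · exact absurd rfl hα
  | ichL P Q => rw [← delayP_interp]; exact .ichL _ _
  | ichR P Q => rw [← delayP_interp]; exact .ichR _ _
  | echL _ ih => exact .echL (ih hα)
  | echR _ ih => exact .echR (ih hα)
  | @echTL _ s₂ _ h₁ ih =>
    have := Step.echTL (s₂ := delayS s₂) (ih hα)
    rw [dmap_dmap h₁.dsupp_finite] at this ⊢
    exact this
  | @echTR s₁ _ _ h₁ ih =>
    have := Step.echTR (s₁ := delayS s₁) (ih hα)
    rw [dmap_dmap h₁.dsupp_finite] at this ⊢
    exact this
  | @parL D s₁ s₂ _ _ h₁ hside ih =>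
    rw [dmap_dmap h₁.dsupp_finite]
    by_cases hD : omA ∈ D
    · simp only [delayS_par_of_mem hD]
      exact .parL h₁ hside
    · have := Step.parL (s₂ := delayS s₂) (ih hα) hside
      simp only [delayS_par_of_notMem hD]
      rwa [dmap_dmap h₁.dsupp_finite] at this
  | @parR D s₁ s₂ _ _ h₂ hside ih =>
    rw [dmap_dmap h₂.dsupp_finite]
    by_cases hD : omA ∈ D
    · simp only [delayS_par_of_mem hD]
      exact .parR h₂ hside
    · have := Step.parR (s₁ := delayS s₁) (ih hα) hside
      simp only [delayS_par_of_notMem hD]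
      rwa [dmap_dmap h₂.dsupp_finite] at this
  | @parS D s₁ s₂ a _ _ ha h₁ h₂ ih₁ ih₂ =>
    have hfin := (h₁.dsupp_finite.prod h₂.dsupp_finite).subset (dsupp_prod_subset _ _)
    rw [dmap_dmap hfin]
    by_cases hD : omA ∈ D
    · simp only [delayS_par_of_mem hD]
      exact .parS ha h₁ h₂
    · have ha' : some a ≠ some omA := by rintro ⟨⟩; exact hD ha
      have := Step.parS ha (ih₁ ha') (ih₂ ha')
      simp only [delayS_par_of_notMem hD]
      rwa [dmap_prod h₁.dsupp_finite h₂.dsupp_finite, dmap_dmap hfin] at this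

lemma enables_omegaNil : Enables omA (omegaNil (A := A)) := ⟨_, .pre omA (.st .nil)⟩

lemma not_step_delayS_omA : ∀ (u : SCSP (TAct A)) {Θ}, ¬ Step (delayS u) (some omA) Θ
  | .nil, _, h | .pre (.inl _) _, _, h | .pre (.inr _) _, _, h | .ich _ _, _, h => by cases h
  | .ech s t, _, h => by
    cases h with
    | echL h => exact not_step_delayS_omA s h
    | echR h => exact not_step_delayS_omA t h
  | .par D s t, _, h => by
    by_cases hD : omA ∈ D
    · rw [delayS_par_of_mem hD] at h
      cases h with
      | parL _ hside | parR _ hside => exact hside omA rfl hD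
    · rw [delayS_par_of_notMem hD] at h
      cases h with
      | parL h _ => exact not_step_delayS_omA s h
      | parR h _ => exact not_step_delayS_omA t h

lemma Step.exists_tau_delay {u : SCSP (TAct A)} {α : Option (TAct A)}
    {Θ : Wt (SCSP (TAct A))} (h : Step u α Θ) (hα : α = some omA) :
    ∃ Δ, Step (delayS u) none Δ ∧ ∀ t ∈ dsupp Δ, Enables omA t := by
  induction h with
  | pre a P =>
    obtain rfl : a = omA := Option.some_inj.1 hα
    refine ⟨dirac omegaNil, .ichL (.st omegaNil) (.st omegaNil), ?_⟩
    simpa [dsupp_dirac] using enables_omegaNil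
  | ichL | ichR | echTL | echTR | parS => cases hα
  | echL _ ih =>
    obtain ⟨Δ, hΔ, hen⟩ := ih hα
    exact ⟨_, .echTL hΔ, forall_dsupp_dmap fun t ht => (hen t ht).ech_left⟩
  | echR _ ih =>
    obtain ⟨Δ, hΔ, hen⟩ := ih hα
    exact ⟨_, .echTR hΔ, forall_dsupp_dmap fun t ht => (hen t ht).ech_right⟩
  | @parL D _ _ _ _ _ hside ih =>
    subst hα
    have hD := hside omA rfl
    obtain ⟨Δ, hΔ, hen⟩ := ih rfl
    rw [delayS_par_of_notMem hD]
    exact ⟨_, .parL hΔ (by simp), forall_dsupp_dmap fun t ht => (hen t ht).par_left hD⟩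
  | @parR D _ _ _ _ _ hside ih =>
    subst hα
    have hD := hside omA rfl
    obtain ⟨Δ, hΔ, hen⟩ := ih rfl
    rw [delayS_par_of_notMem hD]
    exact ⟨_, .parR hΔ (by simp), forall_dsupp_dmap fun t ht => (hen t ht).par_right hD⟩

-- The second alternative covers the τ-steps that replace enabled `ω`-prefixes.
def DelayInversion (u : SCSP (TAct A)) : Prop :=
  ∀ {α Δ'}, Step (delayS u) α Δ' →
    (∃ Δ, Step u α Δ ∧ Δ' = dmap delayS Δ) ∨
      (α = none ∧ Enables omA u ∧ ∀ t ∈ dsupp Δ', Enables omA t)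

lemma delayInversion_ech {s t : SCSP (TAct A)} (hs : DelayInversion s)
    (ht : DelayInversion t) : DelayInversion (.ech s t) := by
  intro α Δ' h
  cases h with
  | echL h =>
    rcases hs h with ⟨Δ, hΔ, rfl⟩ | ⟨⟨⟩, -⟩
    exact .inl ⟨Δ, .echL hΔ, rfl⟩
  | echR h =>
    rcases ht h with ⟨Δ, hΔ, rfl⟩ | ⟨⟨⟩, -⟩
    exact .inl ⟨Δ, .echR hΔ, rfl⟩
  | echTL h =>
    rcases hs h with ⟨Δ, hΔ, rfl⟩ | ⟨-, hω, hen⟩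
    · refine .inl ⟨_, .echTL hΔ, ?_⟩
      rw [dmap_dmap hΔ.dsupp_finite, dmap_dmap hΔ.dsupp_finite]
      rfl
    · exact .inr ⟨rfl, hω.ech_left, forall_dsupp_dmap fun x hx => (hen x hx).ech_left⟩
  | echTR h =>
    rcases ht h with ⟨Δ, hΔ, rfl⟩ | ⟨-, hω, hen⟩
    · refine .inl ⟨_, .echTR hΔ, ?_⟩
      rw [dmap_dmap hΔ.dsupp_finite, dmap_dmap hΔ.dsupp_finite]
      rfl
    · exact .inr ⟨rfl, hω.ech_right, forall_dsupp_dmap fun x hx => (hen x hx).ech_right⟩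

lemma Step.exists_par_of_mem_dsupp {D : Set (TAct A)} {s t : SCSP (TAct A)}
    {α : Option (TAct A)} {Δ : Wt (SCSP (TAct A))} (h : Step (.par D s t) α Δ) {x : SCSP (TAct A)}
    (hx : x ∈ dsupp Δ) : ∃ s' t', x = .par D s' t' := by
  cases h <;> obtain ⟨_, -, rfl⟩ := dsupp_dmap_subset _ _ hx <;> exact ⟨_, _, rfl⟩

lemma delayInversion_par {D : Set (TAct A)} {s t : SCSP (TAct A)} (hs : DelayInversion s)
    (ht : DelayInversion t) : DelayInversion (.par D s t) := by
  intro α Δ' h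
  by_cases hD : omA ∈ D
  · rw [delayS_par_of_mem hD] at h
    refine .inl ⟨Δ', h, (dmap_eq_self fun x hx => ?_).symm⟩
    obtain ⟨s', t', rfl⟩ := h.exists_par_of_mem_dsupp hx
    exact delayS_par_of_mem hD s' t'
  rw [delayS_par_of_notMem hD] at h
  cases h with
  | parL h hside =>
    rcases hs h with ⟨Δ, hΔ, rfl⟩ | ⟨rfl, hω, hen⟩
    · refine .inl ⟨_, .parL hΔ hside, ?_⟩
      rw [dmap_dmap hΔ.dsupp_finite, dmap_dmap hΔ.dsupp_finite]
      simp only [delayS_par_of_notMem hD]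
    · exact .inr ⟨rfl, hω.par_left hD, forall_dsupp_dmap fun x hx => (hen x hx).par_left hD⟩
  | parR h hside =>
    rcases ht h with ⟨Δ, hΔ, rfl⟩ | ⟨rfl, hω, hen⟩
    · refine .inl ⟨_, .parR hΔ hside, ?_⟩
      rw [dmap_dmap hΔ.dsupp_finite, dmap_dmap hΔ.dsupp_finite]
      simp only [delayS_par_of_notMem hD]
    · exact .inr ⟨rfl, hω.par_right hD, forall_dsupp_dmap fun x hx => (hen x hx).par_right hD⟩
  | parS ha h₁ h₂ =>
    rcases hs h₁ with ⟨Δ₁, hΔ₁, rfl⟩ | ⟨⟨⟩, -⟩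
    rcases ht h₂ with ⟨Δ₂, hΔ₂, rfl⟩ | ⟨⟨⟩, -⟩
    have hfin := (hΔ₁.dsupp_finite.prod hΔ₂.dsupp_finite).subset (dsupp_prod_subset _ _)
    refine .inl ⟨_, .parS ha hΔ₁ hΔ₂, ?_⟩
    rw [dmap_prod hΔ₁.dsupp_finite hΔ₂.dsupp_finite, dmap_dmap hfin, dmap_dmap hfin]
    simp only [delayS_par_of_notMem hD, Prod.map_fst, Prod.map_snd]

lemma delayInversion : ∀ u : SCSP (TAct A), DelayInversion u
  | .nil, _, _, h => by cases h
  | .pre (.inl a) P, _, _, h => by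
    cases h
    exact .inl ⟨P.interp, .pre _ P, delayP_interp P⟩
  | .pre (.inr ()) P, _, _, h => by
    have hen : ∀ t ∈ dsupp (PCSP.st (omegaNil (A := A))).interp, Enables omA t := by
      simpa [PCSP.interp, dsupp_dirac] using enables_omegaNil
    cases h with
    | ichL | ichR => exact .inr ⟨rfl, ⟨_, .pre omA P⟩, hen⟩
  | .ich P Q, _, _, h => by
    cases h with
    | ichL => exact .inl ⟨P.interp, .ichL P Q, delayP_interp P⟩
    | ichR => exact .inl ⟨Q.interp, .ichR P Q, delayP_interp Q⟩
  | .ech s t, _, _, h => delayInversion_ech (delayInversion s) (delayInversion t) h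
  | .par D s t, _, _, h => delayInversion_par (delayInversion s) (delayInversion t) h

end DelaySteps

section Outcomes

variable {A : Type}

lemma VMem.eq_one_of_enables {B : Type} {w : B} {s : SCSP B} {r : ℝ} (h : VMem w s r)
    (hen : Enables w s) : r = 1 := by
  obtain ⟨Θ, hΘ⟩ := hen
  cases h with
  | succ => rfl
  | step _ hno => exact absurd hΘ (hno Θ)
  | stuck hst => exact absurd hΘ (hst _ _)

lemma VBarMem.bracketed_delayS {u : SCSP (TAct A)} {r : ℝ} (h : VBarMem omA u r)
    (hu : SWF u) : Bracketed {r | VMem omA (delayS u) r} r := by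
  induction h with
  | succ hω =>
    obtain ⟨Δ, hΔ, hen⟩ := hω.exists_tau_delay rfl
    have := VMem.step (fun _ => 1) (fun _ => not_step_delayS_omA _) hΔ
      fun t ht => VMem.succ (hen t ht).choose_spec
    rw [dexp_one, (hΔ.isDist hu.delayS).1.2.2] at this
    exact .of_mem this
  | step f hα hstep _ ih =>
    obtain ⟨hd, hsw⟩ := hstep.isDist hu
    refine (bracketed_dexpChoices_dmap hd.1 hd.2.1 delayS fun t ht => ih t ht (hsw t ht)).mono ?_
    rintro _ ⟨F, hF, rfl⟩
    exact VMem.step F (fun _ => not_step_delayS_omA _) (hstep.delay hα) hF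
  | stuck hst =>
    refine .of_mem (VMem.stuck fun α Δ' h => ?_)
    rcases delayInversion _ h with ⟨Δ, hΔ, -⟩ | ⟨-, ⟨Θ, hω⟩, -⟩
    exacts [hst _ _ hΔ, hst _ _ hω]

lemma VMem.bracketed_of_delayS {v : SCSP (TAct A)} {r : ℝ} (h : VMem omA v r) :
    ∀ u, SWF u → v = delayS u → Bracketed {r | VBarMem omA u r} r := by
  induction h with
  | succ hω =>
    rintro u - rfl
    exact absurd hω (not_step_delayS_omA u)
  | @step _ α _ f _ hstep hf ih =>
    rintro u hu rfl
    rcases delayInversion u hstep with ⟨Δ, hΔ, rfl⟩ | ⟨-, ⟨Θ, hω⟩, hen⟩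
    · have hα : α ≠ some omA := by
        rintro rfl
        exact not_step_delayS_omA u hstep
      obtain ⟨hd, hsw⟩ := hΔ.isDist hu
      rw [dexp_dmap hd.2.1]
      refine (bracketed_dexpChoices hd.1 hd.2.1 fun t ht =>
        ih _ (map_mem_dsupp_dmap hd.1 hd.2.1 _ ht) t (hsw t ht) rfl).mono ?_
      rintro _ ⟨F, hF, rfl⟩
      exact VBarMem.step F hα hΔ hF
    · rw [dexp_eq_mass fun t ht => (hf t ht).eq_one_of_enables (hen t ht),
        (hstep.isDist hu.delayS).1.2.2]
      exact .of_mem (VBarMem.succ hω)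
  | stuck hst =>
    rintro u - rfl
    refine .of_mem (VBarMem.stuck fun α Δ h => ?_)
    by_cases hα : α = some omA
    · obtain ⟨Δ', h', -⟩ := h.exists_tau_delay hα
      exact hst _ _ h'
    · exact hst _ _ (h.delay hα)

lemma forall_mem_VBarD_bracketed_VD {Δ : Wt (SCSP (TAct A))} (hd : IsDist Δ)
    (hsw : ∀ t ∈ dsupp Δ, SWF t) : ∀ r ∈ VBarD omA Δ, Bracketed (VD omA (dmap delayS Δ)) r := by
  rintro _ ⟨f, hf, rfl⟩
  exact bracketed_dexpChoices_dmap hd.1 hd.2.1 delayS fun t ht =>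
    (hf t ht).bracketed_delayS (hsw t ht)

lemma forall_mem_VD_bracketed_VBarD {Δ : Wt (SCSP (TAct A))} (hd : IsDist Δ)
    (hsw : ∀ t ∈ dsupp Δ, SWF t) : ∀ r ∈ VD omA (dmap delayS Δ), Bracketed (VBarD omA Δ) r := by
  rintro _ ⟨f, hf, rfl⟩
  rw [dexp_dmap hd.2.1]
  exact bracketed_dexpChoices hd.1 hd.2.1 fun t ht =>
    (hf _ (map_mem_dsupp_dmap hd.1 hd.2.1 _ ht)).bracketed_of_delayS t (hsw t ht) rfl

lemma aset_delayP (T : PCSP (TAct A)) (P : PCSP A) :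
    Aset (delayP T) P = VD omA (dmap delayS (applyTest T P).interp) := by
  rw [Aset, ← delayP_applyTest, delayP_interp]

lemma forall_mem_asetBar_bracketed_aset {T : PCSP (TAct A)} (hT : PWF T) {P : PCSP A} (hP : PWF P) :
    ∀ r ∈ AsetBar T P, Bracketed (Aset (delayP T) P) r := by
  obtain ⟨hd, hsw⟩ := (hT.applyTest hP).isDist_interp
  rw [aset_delayP]
  exact forall_mem_VBarD_bracketed_VD hd hsw

lemma forall_mem_aset_bracketed_asetBar {T : PCSP (TAct A)} (hT : PWF T) {P : PCSP A} (hP : PWF P) :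
    ∀ r ∈ Aset (delayP T) P, Bracketed (AsetBar T P) r := by
  obtain ⟨hd, hsw⟩ := (hT.applyTest hP).isDist_interp
  rw [aset_delayP]
  exact forall_mem_VD_bracketed_VBarD hd hsw

end Outcomes

/-- Proposition 5.1: state-based testing is at least as discriminating
as action-based testing. -/
theorem state_based_implies_action_based (A : Type) [Fintype A] (P Q : PCSP A)
    (hP : PWF P) (hQ : PWF Q) :
    (PMay P Q → PMayBar P Q) ∧ (PMust P Q → PMustBar P Q) := by
  refine ⟨fun hmay T hT => ?_, fun hmust T hT => ?_⟩
  · have hPT := hoareLE_of_forall_bracketed (forall_mem_asetBar_bracketed_aset hT hP)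
    have hQT := hoareLE_of_forall_bracketed (forall_mem_aset_bracketed_asetBar hT hQ)
    exact (hPT.trans (hmay _ hT.delayP)).trans hQT
  · have hPT := smythLE_of_forall_bracketed (forall_mem_aset_bracketed_asetBar hT hP)
    have hQT := smythLE_of_forall_bracketed (forall_mem_asetBar_bracketed_aset hT hQ)
    exact (hPT.trans (hmust _ hT.delayP)).trans hQT

end PaperPCSP
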